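/- (Coefficient-sum maximality of outer factors.) Let F be outer in H^∞_{L(H,K)}(𝔻) with Taylor coefficients F_j, and let G ∈ H^∞_{L(H,L)}(𝔻), with Taylor coefficients G_j, satisfy G*G = F*F a.e. on the unit circle. Then for every k ∈ ℕ₀, Σ_{i=0}^{k} G_i* G_i ≤ Σ_{i=0}^{k} F_i* F_i. More strongly, the (k+1)×(k+1) lower triangular block Toeplitz matrices 𝔉_k and 𝔊_k built from the respective Taylor coefficients satisfy 𝔊_k* 𝔊_k ≤ 𝔉_k* 𝔉_k. -/

import Mathlib

/-!
Outerness says that the Schur complement of `T_F* T_F` on the zeroth coordinate is `F₀* F₀`.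
Testing this maximality against the compression of `T_F` to the orthocomplement of
`closure (T_F W₀)`, where `W₀ = {w | w 0 = 0}`, shows that `T_F (x, 0, 0, …)` lies within
`‖F₀ x‖` of `T_F W₀`. Its zeroth coordinate already has norm `‖F₀ x‖`, so its backward shift lies
in the closed range of `T_F`; hence that closed range is invariant under the backward shift `S*`.
For `v` and `ε > 0` the tail `S*^(k+1) T_F v` is then cancelled up to `ε` by some
`T_F S^(k+1) u`, which produces `w` agreeing with `v` on `0, …, k` with
`‖T_F w‖² ≤ ‖𝔉_k v‖² + ε`. Since `‖T_G w‖ = ‖T_F w‖` and `‖𝔊_k v‖ ≤ ‖T_G w‖`, the section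
inequality follows; the coefficient inequality is its case `v = (x, 0, 0, …)`.
-/

open scoped InnerProductSpace
open ContinuousLinearMap

section

variable {H K L : Type*} [NormedAddCommGroup H] [InnerProductSpace ℂ H] [CompleteSpace H]
  [NormedAddCommGroup K] [InnerProductSpace ℂ K] [CompleteSpace K]
  [NormedAddCommGroup L] [InnerProductSpace ℂ L] [CompleteSpace L]

/-- `T` is the (bounded) lower triangular block Toeplitz operator
`T_F = (F_{i-j})_{i,j≥0} : ℓ²_H → ℓ²_K` with symbol coefficients `F_j`; boundedness of
`T` encodes that `F ∈ H^∞_{L(H,K)}(𝔻)`. -/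
def IsToeplitzOf (F : ℕ → H →L[ℂ] K)
    (T : lp (fun _ : ℕ => H) 2 →L[ℂ] lp (fun _ : ℕ => K) 2) : Prop :=
  ∀ (v : lp (fun _ : ℕ => H) 2) (i : ℕ),
    T v i = ∑ j ∈ Finset.range (i + 1), F (i - j) (v j)

/-- The quadratic form of a block matrix supported on `{0,…,k} × {0,…,k}`. -/
noncomputable def schurQF (k : ℕ) (S : ℕ → ℕ → H →L[ℂ] H) (v : ℕ → H) : ℝ :=
  ∑ i ∈ Finset.range (k + 1), ∑ j ∈ Finset.range (k + 1), (⟪S i j (v j), v i⟫_ℂ).re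

/-- `S` is the Schur complement of `T* T` supported on rows and columns `{0,…,k}`:
the maximal positive operator matrix supported there with `T* T - S ≥ 0`. -/
def IsSchurOfTT (T : lp (fun _ : ℕ => H) 2 →L[ℂ] lp (fun _ : ℕ => K) 2) (k : ℕ)
    (S : ℕ → ℕ → H →L[ℂ] H) : Prop :=
  (∀ i j, k < i ∨ k < j → S i j = 0) ∧ (∀ i j, (S i j).adjoint = S j i) ∧
    (∀ v, 0 ≤ schurQF k S v) ∧
    (∀ v : lp (fun _ : ℕ => H) 2, schurQF k S (fun n => v n) ≤ ‖T v‖ ^ 2) ∧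
    ∀ X : ℕ → ℕ → H →L[ℂ] H, (∀ i j, k < i ∨ k < j → X i j = 0) →
      (∀ i j, (X i j).adjoint = X j i) → (∀ v, 0 ≤ schurQF k X v) →
      (∀ v : lp (fun _ : ℕ => H) 2, schurQF k X (fun n => v n) ≤ ‖T v‖ ^ 2) →
      ∀ v, schurQF k X v ≤ schurQF k S v

end

local notation "ℓ²(" E ")" => lp (fun _ : ℕ => E) 2

namespace lp

variable {𝕜 E : Type*} [NormedField 𝕜] [NormedAddCommGroup E] [NormedSpace 𝕜 E]

theorem hasSum_norm_sq (f : ℓ²(E)) : HasSum (fun i => ‖f i‖ ^ 2) (‖f‖ ^ 2) := by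
  simpa using lp.hasSum_norm (p := 2) (by norm_num) f

theorem norm_sq_eq_sum_add_norm_sq {f g : ℓ²(E)} (n : ℕ) (hg : ∀ i, g i = f (i + n)) :
    ‖f‖ ^ 2 = ∑ i ∈ Finset.range n, ‖f i‖ ^ 2 + ‖g‖ ^ 2 := by
  have htail := (hasSum_nat_add_iff' n).2 (hasSum_norm_sq f)
  simp only [← hg] at htail
  linarith [htail.unique (hasSum_norm_sq g)]

theorem memℓp_comp_add_right (f : ℓ²(E)) (n : ℕ) : Memℓp (fun i => f (i + n)) 2 :=
  memℓp_gen ((summable_nat_add_iff n).2 ((memℓp_gen_iff (by norm_num)).1 f.2))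

variable (𝕜) in
noncomputable def shiftLeft (n : ℕ) : ℓ²(E) →L[𝕜] ℓ²(E) :=
  LinearMap.mkContinuous
    { toFun f := ⟨fun i => f (i + n), memℓp_comp_add_right f n⟩
      map_add' _ _ := rfl
      map_smul' _ _ := rfl }
    1
    fun f => by
      set g : ℓ²(E) := ⟨fun i => f (i + n), memℓp_comp_add_right f n⟩
      change ‖g‖ ≤ 1 * ‖f‖
      have hsplit := norm_sq_eq_sum_add_norm_sq (g := g) n fun _ => rfl
      rw [one_mul, ← pow_le_pow_iff_left₀ (norm_nonneg _) (norm_nonneg _) two_ne_zero]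
      linarith [Finset.sum_nonneg fun i (_ : i ∈ Finset.range n) => sq_nonneg ‖f i‖]

@[simp]
theorem shiftLeft_apply (n : ℕ) (f : ℓ²(E)) (i : ℕ) : shiftLeft 𝕜 n f i = f (i + n) := rfl

theorem norm_sq_eq_sum_add_norm_shiftLeft_sq (n : ℕ) (f : ℓ²(E)) :
    ‖f‖ ^ 2 = ∑ i ∈ Finset.range n, ‖f i‖ ^ 2 + ‖shiftLeft 𝕜 n f‖ ^ 2 :=
  norm_sq_eq_sum_add_norm_sq n fun _ => rfl

theorem shiftLeft_succ (n : ℕ) (f : ℓ²(E)) :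
    shiftLeft 𝕜 (n + 1) f = shiftLeft 𝕜 1 (shiftLeft 𝕜 n f) := by
  ext i
  simp only [shiftLeft_apply, add_right_comm i 1 n, add_assoc]

theorem memℓp_shiftRight (f : ℓ²(E)) (n : ℕ) :
    Memℓp (fun i => if n ≤ i then f (i - n) else 0) 2 := by
  refine memℓp_gen ((summable_nat_add_iff n).1 ?_)
  simpa using (memℓp_gen_iff (by norm_num)).1 f.2

def shiftRight (n : ℕ) (f : ℓ²(E)) : ℓ²(E) :=
  ⟨fun i => if n ≤ i then f (i - n) else 0, memℓp_shiftRight f n⟩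

theorem shiftRight_apply (n : ℕ) (f : ℓ²(E)) (i : ℕ) :
    shiftRight n f i = if n ≤ i then f (i - n) else 0 := rfl

theorem shiftRight_apply_of_lt {n i : ℕ} (h : i < n) (f : ℓ²(E)) : shiftRight n f i = 0 :=
  if_neg (by omega)

@[simp]
theorem shiftLeft_shiftRight (n : ℕ) (f : ℓ²(E)) : shiftLeft 𝕜 n (shiftRight n f) = f := by
  ext i
  simp [shiftRight_apply]

end lp

open lp

theorem norm_apply_eq_of_adjoint_comp_self_eq {𝕜 E F G : Type*} [RCLike 𝕜]
    [NormedAddCommGroup E] [InnerProductSpace 𝕜 E] [CompleteSpace E]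
    [NormedAddCommGroup F] [InnerProductSpace 𝕜 F] [CompleteSpace F]
    [NormedAddCommGroup G] [InnerProductSpace 𝕜 G] [CompleteSpace G]
    {A : E →L[𝕜] F} {B : E →L[𝕜] G} (h : A.adjoint ∘L A = B.adjoint ∘L B) (x : E) :
    ‖A x‖ = ‖B x‖ := by
  rw [apply_norm_eq_sqrt_inner_adjoint_left, h, ← apply_norm_eq_sqrt_inner_adjoint_left]

namespace IsToeplitzOf

variable {H K : Type*} [NormedAddCommGroup H] [InnerProductSpace ℂ H]
  [NormedAddCommGroup K] [InnerProductSpace ℂ K] {F : ℕ → H →L[ℂ] K} {T : ℓ²(H) →L[ℂ] ℓ²(K)}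

theorem apply_of_eqOn (hT : IsToeplitzOf F T) {w : ℓ²(H)} {v : ℕ → H} {l : ℕ}
    (hwv : ∀ j ≤ l, w j = v j) : T w l = ∑ j ∈ Finset.range (l + 1), F (l - j) (v j) := by
  rw [hT w l]
  refine Finset.sum_congr rfl fun j hj => ?_
  rw [hwv j (Nat.lt_succ_iff.1 (Finset.mem_range.1 hj))]

theorem apply_zero (hT : IsToeplitzOf F T) (w : ℓ²(H)) : T w 0 = F 0 (w 0) := by
  simp [hT w 0]

theorem shiftLeft_one_apply (hT : IsToeplitzOf F T) {w : ℓ²(H)} (hw : w 0 = 0) :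
    shiftLeft ℂ 1 (T w) = T (shiftLeft ℂ 1 w) := by
  ext m
  rw [shiftLeft_apply, hT, hT, Finset.sum_range_succ', hw, map_zero, add_zero]
  simp

theorem apply_shiftRight (hT : IsToeplitzOf F T) (n : ℕ) (u : ℓ²(H)) :
    T (shiftRight n u) = shiftRight n (T u) := by
  ext i
  rw [hT, shiftRight_apply]
  split_ifs with hi
  · obtain ⟨m, rfl⟩ := Nat.exists_eq_add_of_le hi
    rw [show n + m + 1 = n + (m + 1) by omega, Finset.sum_range_add, hT,
      Finset.sum_eq_zero fun j hj => by
        rw [shiftRight_apply_of_lt (Finset.mem_range.1 hj), map_zero], zero_add,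
      Nat.add_sub_cancel_left]
    refine Finset.sum_congr rfl fun j _ => ?_
    rw [shiftRight_apply, if_pos (Nat.le_add_right n j), Nat.add_sub_cancel_left,
      Nat.add_sub_add_left]
  · exact Finset.sum_eq_zero fun j hj => by
      rw [shiftRight_apply_of_lt (by simp at hj; omega), map_zero]

theorem sum_norm_sq_apply_of_eqOn (hT : IsToeplitzOf F T) {n : ℕ} {w : ℓ²(H)} {v : ℕ → H}
    (hwv : ∀ j < n, w j = v j) :
    ∑ l ∈ Finset.range n, ‖T w l‖ ^ 2 =
      ∑ l ∈ Finset.range n, ‖∑ j ∈ Finset.range (l + 1), F (l - j) (v j)‖ ^ 2 :=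
  Finset.sum_congr rfl fun l hl => by
    rw [hT.apply_of_eqOn fun j hj => hwv j (lt_of_le_of_lt hj (Finset.mem_range.1 hl))]

theorem exists_eqOn_norm_shiftLeft_sq_lt (hT : IsToeplitzOf F T) {n : ℕ}
    (hclosure : ∀ f, shiftLeft ℂ n (T f) ∈ closure (Set.range T)) (v : ℕ → H) {ε : ℝ}
    (hε : 0 < ε) : ∃ w : ℓ²(H), (∀ j < n, w j = v j) ∧ ‖shiftLeft ℂ n (T w)‖ ^ 2 < ε := by
  set t : ℓ²(H) := ∑ j ∈ Finset.range n, lp.single 2 j (v j)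
  obtain ⟨_, ⟨u, rfl⟩, hu⟩ := Metric.mem_closure_iff.1 (hclosure t) (√ε) (Real.sqrt_pos.2 hε)
  refine ⟨t - shiftRight n u, fun j hj => ?_, ?_⟩
  · rw [lp.coeFn_sub, Pi.sub_apply, shiftRight_apply_of_lt hj, sub_zero, lp.coeFn_sum,
      Finset.sum_apply]
    simp [lp.single_apply, hj]
  · rw [map_sub, hT.apply_shiftRight, map_sub, shiftLeft_shiftRight, ← dist_eq_norm,
      ← Real.sq_sqrt hε.le]
    exact pow_lt_pow_left₀ hu dist_nonneg two_ne_zero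

end IsToeplitzOf

section Outer

variable {H K : Type*} [NormedAddCommGroup H] [InnerProductSpace ℂ H] [CompleteSpace H]
  [NormedAddCommGroup K] [InnerProductSpace ℂ K]

theorem schurQF_zero_corner {E : Type*} [NormedAddCommGroup E] [InnerProductSpace ℂ E]
    [CompleteSpace E] (A : H →L[ℂ] E) (v : ℕ → H) :
    schurQF 0 (fun i j => if i = 0 ∧ j = 0 then A.adjoint ∘L A else 0) v = ‖A (v 0)‖ ^ 2 := by
  simp [schurQF, apply_norm_sq_eq_inner_adjoint_left]

theorem IsSchurOfTT.norm_apply_le {E E' : Type*} [NormedAddCommGroup E] [InnerProductSpace ℂ E]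
    [CompleteSpace E] [NormedAddCommGroup E'] [InnerProductSpace ℂ E'] [CompleteSpace E']
    {T : ℓ²(H) →L[ℂ] ℓ²(K)} {B : H →L[ℂ] E}
    (hT : IsSchurOfTT T 0 (fun i j => if i = 0 ∧ j = 0 then B.adjoint ∘L B else 0))
    {A : H →L[ℂ] E'} (hA : ∀ v : ℓ²(H), ‖A (v 0)‖ ≤ ‖T v‖) (x : H) : ‖A x‖ ≤ ‖B x‖ := by
  have hmax := hT.2.2.2.2 (fun i j => if i = 0 ∧ j = 0 then A.adjoint ∘L A else 0)
    (fun i j hij => if_neg (by omega))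
    (fun i j => by
      by_cases h : i = 0 ∧ j = 0
      · simp [h.1, h.2, adjoint_comp]
      · rw [if_neg h, if_neg (by tauto), map_zero])
    (fun v => by rw [schurQF_zero_corner]; positivity)
    (fun v => by rw [schurQF_zero_corner]; gcongr; exact hA v)
    (fun _ => x)
  rw [schurQF_zero_corner, schurQF_zero_corner] at hmax
  exact (pow_le_pow_iff_left₀ (norm_nonneg _) (norm_nonneg _) two_ne_zero).1 hmax

theorem IsSchurOfTT.exists_norm_sub_sq_lt {E : Type*} [NormedAddCommGroup E]
    [InnerProductSpace ℂ E] [CompleteSpace E] [CompleteSpace K]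
    {T : ℓ²(H) →L[ℂ] ℓ²(K)} {B : H →L[ℂ] E}
    (hT : IsSchurOfTT T 0 (fun i j => if i = 0 ∧ j = 0 then B.adjoint ∘L B else 0))
    (x : H) {η : ℝ} (hη : 0 < η) :
    ∃ w : ℓ²(H), w 0 = 0 ∧ ‖T (lp.single 2 0 x) - T w‖ ^ 2 < ‖B x‖ ^ 2 + η := by
  set W₀ : Submodule ℂ ℓ²(H) := LinearMap.ker (lp.evalₗ (𝕜 := ℂ) (fun _ : ℕ => H) 2 0)
  set M := (W₀.map (T : ℓ²(H) →ₗ[ℂ] ℓ²(K))).topologicalClosure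
  set ι := lp.singleContinuousLinearMap ℂ (fun _ : ℕ => H) 2 0
  have hproj (v : ℓ²(H)) : Mᗮ.starProjection (T v) = Mᗮ.starProjection (T (ι (v 0))) := by
    rw [← sub_eq_zero, ← map_sub, ← map_sub, Submodule.starProjection_apply_eq_zero_iff]
    refine M.le_orthogonal_orthogonal (Submodule.le_topologicalClosure _
      (Submodule.mem_map_of_mem ?_))
    simp [W₀, ι]
  have hdist : ‖T (ι x) - M.starProjection (T (ι x))‖ ^ 2 < ‖B x‖ ^ 2 + η := by
    rw [← Submodule.starProjection_orthogonal_val]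
    have := hT.norm_apply_le (A := Mᗮ.starProjection ∘L T ∘L ι)
      (fun v => hproj v ▸ Submodule.norm_starProjection_apply_le _ _) x
    have := pow_le_pow_left₀ (norm_nonneg _) this 2
    simp only [ContinuousLinearMap.comp_apply] at this
    linarith
  have hmem : M.starProjection (T (ι x)) ∈ closure (T '' W₀) := by
    have h := M.starProjection_apply_mem (T (ι x))
    rw [← SetLike.mem_coe, Submodule.topologicalClosure_coe, Submodule.map_coe] at h
    exact h
  obtain ⟨_, hlt, w, hw, rfl⟩ := mem_closure_iff.1 hmem
    {y : ℓ²(K) | ‖T (ι x) - y‖ ^ 2 < ‖B x‖ ^ 2 + η} (isOpen_lt (by fun_prop) continuous_const)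
    (Set.mem_ofPred.2 hdist)
  exact ⟨w, by simpa [W₀] using hw, hlt⟩

end Outer

namespace IsToeplitzOf

variable {H K L : Type*} [NormedAddCommGroup H] [InnerProductSpace ℂ H] [CompleteSpace H]
  [NormedAddCommGroup K] [InnerProductSpace ℂ K] [CompleteSpace K]
  [NormedAddCommGroup L] [InnerProductSpace ℂ L] [CompleteSpace L]
  {F : ℕ → H →L[ℂ] K} {G : ℕ → H →L[ℂ] L} {T : ℓ²(H) →L[ℂ] ℓ²(K)} {T' : ℓ²(H) →L[ℂ] ℓ²(L)}

theorem shiftLeft_one_apply_single_mem_closure (hT : IsToeplitzOf F T)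
    (houter : IsSchurOfTT T 0 (fun i j => if i = 0 ∧ j = 0 then (F 0).adjoint ∘L F 0 else 0))
    (x : H) : shiftLeft ℂ 1 (T (lp.single 2 0 x)) ∈ closure (Set.range T) := by
  refine Metric.mem_closure_iff.2 fun ε hε => ?_
  obtain ⟨w, hw0, hw⟩ := houter.exists_norm_sub_sq_lt x (pow_pos hε 2)
  have h0 : (T (lp.single 2 0 x) - T w) 0 = F 0 x := by simp [hT.apply_zero, hw0]
  have hsplit := norm_sq_eq_sum_add_norm_shiftLeft_sq (𝕜 := ℂ) 1 (T (lp.single 2 0 x) - T w)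
  rw [Finset.sum_range_one, h0, map_sub, hT.shiftLeft_one_apply hw0] at hsplit
  refine ⟨T (shiftLeft ℂ 1 w), ⟨_, rfl⟩, ?_⟩
  rw [dist_eq_norm]
  exact lt_of_pow_lt_pow_left₀ 2 hε.le (by linarith)

theorem shiftLeft_apply_mem_closure_range (hT : IsToeplitzOf F T)
    (houter : IsSchurOfTT T 0 (fun i j => if i = 0 ∧ j = 0 then (F 0).adjoint ∘L F 0 else 0))
    (n : ℕ) (f : ℓ²(H)) : shiftLeft ℂ n (T f) ∈ closure (Set.range T) := by
  set C := (LinearMap.range (T : ℓ²(H) →ₗ[ℂ] ℓ²(K))).topologicalClosure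
  have hC : (C : Set ℓ²(K)) = closure (Set.range T) := by
    rw [Submodule.topologicalClosure_coe, LinearMap.coe_range, ContinuousLinearMap.coe_coe]
  have hrange :
      LinearMap.range (T : ℓ²(H) →ₗ[ℂ] ℓ²(K)) ≤ C.comap (shiftLeft (E := K) ℂ 1).toLinearMap := by
    rintro _ ⟨f, rfl⟩
    have hf0 : (f - lp.single 2 0 (f 0) : ℓ²(H)) 0 = 0 := by simp
    have hdecomp : shiftLeft ℂ 1 (T f) =
        shiftLeft ℂ 1 (T (lp.single 2 0 (f 0))) + T (shiftLeft ℂ 1 (f - lp.single 2 0 (f 0))) := by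
      rw [← hT.shiftLeft_one_apply hf0, ← map_add, ← map_add, add_sub_cancel]
    change shiftLeft ℂ 1 (T f) ∈ C
    rw [hdecomp]
    refine C.add_mem ?_ (Submodule.le_topologicalClosure _ ⟨_, rfl⟩)
    rw [← SetLike.mem_coe, hC]
    exact hT.shiftLeft_one_apply_single_mem_closure houter (f 0)
  have hinvariant : C ≤ C.comap (shiftLeft (E := K) ℂ 1).toLinearMap :=
    Submodule.topologicalClosure_minimal _ hrange
      ((Submodule.isClosed_topologicalClosure _).preimage (shiftLeft ℂ 1).continuous)
  rw [← hC, SetLike.mem_coe]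
  induction n with
  | zero => exact Submodule.le_topologicalClosure _ ⟨f, rfl⟩
  | succ n ih => rw [shiftLeft_succ]; exact hinvariant ih

theorem sum_norm_sq_le_of_adjoint_comp_self_eq (hT : IsToeplitzOf F T)
    (hT' : IsToeplitzOf G T') (heq : T.adjoint ∘L T = T'.adjoint ∘L T') {n : ℕ}
    (hclosure : ∀ f, shiftLeft ℂ n (T f) ∈ closure (Set.range T)) (v : ℕ → H) :
    ∑ l ∈ Finset.range n, ‖∑ j ∈ Finset.range (l + 1), G (l - j) (v j)‖ ^ 2 ≤
      ∑ l ∈ Finset.range n, ‖∑ j ∈ Finset.range (l + 1), F (l - j) (v j)‖ ^ 2 := by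
  refine le_of_forall_pos_le_add fun ε hε => ?_
  obtain ⟨w, hwv, hw⟩ := hT.exists_eqOn_norm_shiftLeft_sq_lt hclosure v hε
  rw [← hT.sum_norm_sq_apply_of_eqOn hwv, ← hT'.sum_norm_sq_apply_of_eqOn hwv]
  have hsplitF := norm_sq_eq_sum_add_norm_shiftLeft_sq (𝕜 := ℂ) n (T w)
  have hsplitG := norm_sq_eq_sum_add_norm_shiftLeft_sq (𝕜 := ℂ) n (T' w)
  rw [norm_apply_eq_of_adjoint_comp_self_eq heq w] at hsplitF
  linarith [sq_nonneg ‖shiftLeft ℂ n (T' w)‖]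

end IsToeplitzOf

theorem sum_range_apply_sub_single_zero {M N 𝓕 : Type*} [AddCommMonoid M] [AddCommMonoid N]
    [FunLike 𝓕 M N] [ZeroHomClass 𝓕 M N] (F : ℕ → 𝓕) (l : ℕ) (x : M) :
    ∑ j ∈ Finset.range (l + 1), F (l - j) (Pi.single (M := fun _ : ℕ => M) 0 x j) = F l x := by
  rw [Finset.sum_eq_single_of_mem 0 (by simp) fun j _ hj => by simp [hj]]
  simp

section

variable {H K L : Type*} [NormedAddCommGroup H] [InnerProductSpace ℂ H] [CompleteSpace H]
  [NormedAddCommGroup K] [InnerProductSpace ℂ K] [CompleteSpace K]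
  [NormedAddCommGroup L] [InnerProductSpace ℂ L] [CompleteSpace L]

/-- Coefficient-sum maximality of outer factors: if `F` is outer and `F*F = G*G` on the
circle, then `∑_{i=0}^k G_i* G_i ≤ ∑_{i=0}^k F_i* F_i` and, more strongly,
`𝔊_k* 𝔊_k ≤ 𝔉_k* 𝔉_k` for the lower triangular Toeplitz sections. -/
theorem outer_coefficient_maximal (F : ℕ → H →L[ℂ] K) (G : ℕ → H →L[ℂ] L)
    (TF : lp (fun _ : ℕ => H) 2 →L[ℂ] lp (fun _ : ℕ => K) 2)
    (TG : lp (fun _ : ℕ => H) 2 →L[ℂ] lp (fun _ : ℕ => L) 2)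
    (hTF : IsToeplitzOf F TF) (hTG : IsToeplitzOf G TG)
    (houter : IsSchurOfTT TF 0
      (fun i j => if i = 0 ∧ j = 0 then (F 0).adjoint ∘L F 0 else 0))
    (heq : TF.adjoint ∘L TF = TG.adjoint ∘L TG) :
    (∀ (k : ℕ) (x : H),
      ∑ i ∈ Finset.range (k + 1), ‖G i x‖ ^ 2 ≤ ∑ i ∈ Finset.range (k + 1), ‖F i x‖ ^ 2) ∧
    ∀ (k : ℕ) (v : ℕ → H),
      ∑ l ∈ Finset.range (k + 1), ‖∑ j ∈ Finset.range (l + 1), G (l - j) (v j)‖ ^ 2 ≤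
        ∑ l ∈ Finset.range (k + 1), ‖∑ j ∈ Finset.range (l + 1), F (l - j) (v j)‖ ^ 2 := by
  have hsections (k : ℕ) (v : ℕ → H) :=
    hTF.sum_norm_sq_le_of_adjoint_comp_self_eq hTG heq
      (hTF.shiftLeft_apply_mem_closure_range houter (k + 1)) v
  refine ⟨fun k x => ?_, hsections⟩
  simpa only [sum_range_apply_sub_single_zero] using hsections k (Pi.single 0 x)

end
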